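/- Let G be a finite connected balanced bipartite graph and let S ⊊ V be a proper subset of the vertex set. Then L is strictly concave on the face Δ_S = {v ∈ Δ : v_i = 0 if and only if i ∉ S}: for all v, w ∈ Δ_S with v ≠ w and all t ∈ (0,1), L(tv + (1−t)w) > t L(v) + (1−t) L(w). -/

import Mathlib

open Finset

/-- `v_i + v_j` as a function of the unordered pair `{i,j}`. -/
noncomputable def pairSum {m : ℕ} (v : Fin m → ℝ) : Sym2 (Fin m) → ℝ :=
  Sym2.lift ⟨fun i j => v i + v j, fun i j => add_comm (v i) (v j)⟩

/-- The domain `Δ`. -/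
def urnDomain {m : ℕ} (G : SimpleGraph (Fin m)) (c : ℝ) : Set (Fin m → ℝ) :=
  {v | (∀ i, 0 ≤ v i) ∧ (∑ i, v i) = 1 ∧ ∀ i j, G.Adj i j → c ≤ v i + v j}

/-- The face `Δ_S = {v ∈ Δ : v_i = 0 iff i ∉ S}`. -/
def urnFace {m : ℕ} (G : SimpleGraph (Fin m)) (c : ℝ) (S : Finset (Fin m)) :
    Set (Fin m → ℝ) :=
  {v ∈ urnDomain G c | ∀ i, v i = 0 ↔ i ∉ S}

/-- The function `L(v) = -Σ_i v_i + (1/N) Σ_{{i,j} ∈ E} log (v_i + v_j)`. -/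
noncomputable def lyap {m : ℕ} (G : SimpleGraph (Fin m)) [DecidableRel G.Adj] (N : ℕ)
    (v : Fin m → ℝ) : ℝ :=
  -∑ i, v i + (1 / (N : ℝ)) * ∑ e ∈ G.edgeFinset, Real.log (pairSum v e)

/-! Everything only rests on the strict concavity of `log`: the only way the inequality can
fail to be strict is that all edge sums `v_i + v_j` of `v` and `w` agree. Then `v - w` changes
sign along every edge, so on a connected graph it is determined by its value at one vertex;
on a proper face some vertex is `0` for both points, hence `v = w`. -/

section PairSum

variable {m : ℕ}

@[simp]
lemma pairSum_mk (v : Fin m → ℝ) (i j : Fin m) : pairSum v s(i, j) = v i + v j := rfl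

lemma pairSum_smul_add_smul (v w : Fin m → ℝ) (a b : ℝ) (e : Sym2 (Fin m)) :
    pairSum (a • v + b • w) e = a * pairSum v e + b * pairSum w e := by
  induction e using Sym2.ind with
  | _ i j => simp only [pairSum_mk, Pi.add_apply, Pi.smul_apply, smul_eq_mul]; ring

lemma pairSum_pos_of_mem_urnDomain {G : SimpleGraph (Fin m)} {c : ℝ} (hc : 0 < c)
    {v : Fin m → ℝ} (hv : v ∈ urnDomain G c) {e : Sym2 (Fin m)} (he : e ∈ G.edgeSet) :
    0 < pairSum v e := by
  induction e using Sym2.ind with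
  | _ i j => exact hc.trans_le (hv.2.2 i j he)

lemma eq_of_pairSum_eq_of_connected {G : SimpleGraph (Fin m)} (hG : G.Connected)
    {v w : Fin m → ℝ} {k : Fin m} (hk : v k = w k)
    (h : ∀ e ∈ G.edgeSet, pairSum v e = pairSum w e) : v = w := by
  have propagate : ∀ a b (p : G.Walk a b), v a = w a → v b = w b := by
    intro a b p
    induction p with
    | nil => exact id
    | cons hadj _ ih =>
      intro hab
      have := h s(_, _) hadj
      rw [pairSum_mk, pairSum_mk] at this
      exact ih (by linarith)
  funext j
  exact propagate k j (hG k j).some hk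

end PairSum

lemma sum_log_smul_add_smul_lt {ι : Type*} {s : Finset ι} {a b : ι → ℝ}
    (ha : ∀ i ∈ s, 0 < a i) (hb : ∀ i ∈ s, 0 < b i) (hab : ∃ i ∈ s, a i ≠ b i)
    {t : ℝ} (ht0 : 0 < t) (ht1 : t < 1) :
    t * ∑ i ∈ s, Real.log (a i) + (1 - t) * ∑ i ∈ s, Real.log (b i)
      < ∑ i ∈ s, Real.log (t * a i + (1 - t) * b i) := by
  rw [mul_sum, mul_sum, ← sum_add_distrib]
  obtain ⟨i₀, hi₀, hne⟩ := hab
  refine sum_lt_sum (fun i hi => ?_) ⟨i₀, hi₀, ?_⟩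
  · exact strictConcaveOn_log_Ioi.concaveOn.2 (ha i hi) (hb i hi) ht0.le (by linarith)
      (by ring)
  · exact strictConcaveOn_log_Ioi.2 (ha i₀ hi₀) (hb i₀ hi₀) hne ht0 (by linarith) (by ring)

theorem lyap_strictly_concave_on_proper_face_general
    {m : ℕ} (G : SimpleGraph (Fin m)) [DecidableRel G.Adj]
    (hconn : G.Connected)
    (N : ℕ)
    (c : ℝ) (hc0 : 0 < c) (hc1 : c < 1 / (N : ℝ))
    (S : Finset (Fin m)) (hS : S ≠ Finset.univ) :
    ∀ v ∈ urnFace G c S, ∀ w ∈ urnFace G c S, v ≠ w → ∀ t : ℝ, 0 < t → t < 1 →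
      t * lyap G N v + (1 - t) * lyap G N w < lyap G N (t • v + (1 - t) • w) := by
  intro v ⟨hv, hvS⟩ w ⟨hw, hwS⟩ hvw t ht0 ht1
  have hN : 0 < 1 / (N : ℝ) := hc0.trans hc1
  obtain ⟨k, hk⟩ : ∃ k, k ∉ S := by simpa [eq_univ_iff_forall] using hS
  have hedge : ∃ e ∈ G.edgeFinset, pairSum v e ≠ pairSum w e := by
    contrapose! hvw
    refine eq_of_pairSum_eq_of_connected hconn (k := k) ?_ fun e he => ?_
    · rw [(hvS k).mpr hk, (hwS k).mpr hk]
    · exact hvw e (G.mem_edgeFinset.mpr he)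
  have hlog := sum_log_smul_add_smul_lt
    (fun e he => pairSum_pos_of_mem_urnDomain hc0 hv (G.mem_edgeFinset.mp he))
    (fun e he => pairSum_pos_of_mem_urnDomain hc0 hw (G.mem_edgeFinset.mp he)) hedge ht0 ht1
  have hsum : ∑ i, (t • v + (1 - t) • w) i = t * ∑ i, v i + (1 - t) * ∑ i, w i := by
    simp only [Pi.add_apply, Pi.smul_apply, smul_eq_mul, sum_add_distrib, mul_sum]
  simp only [lyap, pairSum_smul_add_smul, hsum]
  nlinarith [mul_lt_mul_of_pos_left hlog hN]

/-- If `G` is a finite connected balanced bipartite graph and `S ⊊ V`, then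
`L` is strictly concave on the face `Δ_S`. -/
theorem lyap_strictly_concave_on_proper_face
    {m : ℕ} (hm : 2 ≤ m) (G : SimpleGraph (Fin m)) [DecidableRel G.Adj]
    (hconn : G.Connected)
    (A : Finset (Fin m)) (hbip : ∀ i j, G.Adj i j → (i ∈ A ↔ j ∉ A)) (hbal : 2 * A.card = m)
    (N : ℕ) (hN : N = G.edgeFinset.card)
    (c : ℝ) (hc0 : 0 < c) (hc1 : c < 1 / (N : ℝ))
    (S : Finset (Fin m)) (hS : S ≠ Finset.univ) :
    ∀ v ∈ urnFace G c S, ∀ w ∈ urnFace G c S, v ≠ w → ∀ t : ℝ, 0 < t → t < 1 →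
      t * lyap G N v + (1 - t) * lyap G N w < lyap G N (t • v + (1 - t) • w) :=
  lyap_strictly_concave_on_proper_face_general G hconn N c hc0 hc1 S hS
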